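/- Let α ∈ (0,1), let F be a cumulative distribution function with m(F) finite that satisfies the quantile growth condition at level α with constants b_α > 0 and M_α > 0, and let G be a cumulative distribution function with d(F,G) finite. Then |VaR_α(F) − VaR_α(G)| ≤ max{ b_α, (1 + 2·m(F)/M_α) / min{α, 1−α} } · d(F,G); that is, the value-at-risk is Lipschitz in this norm with explicit constant. -/

import Mathlib

open MeasureTheory

/-- A cumulative distribution function: nondecreasing, right-continuous,
tending to `0` at `−∞` and to `1` at `+∞`. -/
def IsCDF (F : ℝ → ℝ) : Prop :=
  Monotone F ∧ (∀ y : ℝ, ContinuousWithinAt F (Set.Ici y) y) ∧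
    Filter.Tendsto F Filter.atBot (nhds 0) ∧ Filter.Tendsto F Filter.atTop (nhds 1)

/-- Value-at-risk at level `α`: `VaR_α(F) = inf{ y : F y ≥ α }`. -/
noncomputable def VaR (α : ℝ) (F : ℝ → ℝ) : ℝ :=
  sInf {y : ℝ | α ≤ F y}

/-- `m(F) = max{1, ∫_{−∞}^0 F, ∫_0^∞ (1 − F)}`, a tail-size functional. -/
noncomputable def mTail (F : ℝ → ℝ) : ℝ :=
  max 1 (max (∫ y in Set.Iic (0 : ℝ), F y) (∫ y in Set.Ioi (0 : ℝ), (1 - F y)))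

/-- `d(F,G) = max{ sup_y |F−G|, |∫_{−∞}^0 (F−G)|, |∫_0^∞ (F−G)| }`, the norm
distance between two CDFs. -/
noncomputable def dDist (F G : ℝ → ℝ) : ℝ :=
  max (⨆ y : ℝ, |F y - G y|)
    (max |∫ y in Set.Iic (0 : ℝ), (F y - G y)| |∫ y in Set.Ioi (0 : ℝ), (F y - G y)|)

/-- `F` satisfies the quantile growth condition at level `α` with constants
`b, M`: `|F(VaR_α(F) + b·y) − α| ≥ |y|` for all `y ∈ [−M, M]`. -/
def QuantileGrowth (α : ℝ) (F : ℝ → ℝ) (b M : ℝ) : Prop :=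
  ∀ y ∈ Set.Icc (-M) M, |y| ≤ |F (VaR α F + b * y) - α|

/-! The proof splits on the size of `d = d(F,G)`. If `d < M_α`, the sup-distance `δ ≤ d` moves `G`
at most `δ` away from `F`, and the quantile growth condition makes `F` cross the level `α` within
`b_α δ` of `VaR_α(F)`, so `|VaR_α(F) − VaR_α(G)| ≤ b_α δ`. If `d ≥ M_α`, a crude bound suffices:
a CDF `H` stays `≥ α` on `[VaR_α(H), 0]` and `< α` on `(0, VaR_α(H))`, so `|VaR_α(H)|` is at most
a tail integral divided by `min{α, 1 − α}`; the tail integrals of `G` exceed those of `F` by at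
most `d`, and `2 m(F) ≤ (2 m(F) / M_α) d`. -/

open Set Filter

namespace IsCDF

variable {α : ℝ} {F G H : ℝ → ℝ}

lemma nonneg (hF : IsCDF F) (y : ℝ) : 0 ≤ F y :=
  le_of_tendsto hF.2.2.1 (eventually_atBot.mpr ⟨y, fun _ hz => hF.1 hz⟩)

lemma le_one (hF : IsCDF F) (y : ℝ) : F y ≤ 1 :=
  ge_of_tendsto hF.2.2.2 (eventually_atTop.mpr ⟨y, fun _ hz => hF.1 hz⟩)

lemma nonempty_setOf_le (hα : α < 1) (hF : IsCDF F) : {y | α ≤ F y}.Nonempty :=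
  (hF.2.2.2.eventually (eventually_ge_nhds hα)).exists

lemma bddBelow_setOf_le (hα : 0 < α) (hF : IsCDF F) : BddBelow {y | α ≤ F y} := by
  obtain ⟨z, hz⟩ := (hF.2.2.1.eventually (eventually_lt_nhds hα)).exists
  exact ⟨z, fun y hy => le_of_not_gt fun hyz => (hy.trans (hF.1 hyz.le)).not_gt hz⟩

lemma VaR_le (hα : 0 < α) (hF : IsCDF F) {y : ℝ} (hy : α ≤ F y) : VaR α F ≤ y :=
  csInf_le (hF.bddBelow_setOf_le hα) hy

lemma le_VaR (hα : α < 1) (hF : IsCDF F) {x : ℝ} (hx : ∀ y, α ≤ F y → x ≤ y) : x ≤ VaR α F :=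
  le_csInf (hF.nonempty_setOf_le hα) hx

lemma apply_lt_of_lt_VaR (hα : 0 < α) (hF : IsCDF F) {x : ℝ} (hx : x < VaR α F) : F x < α :=
  lt_of_not_ge fun h => (hF.VaR_le hα h).not_gt hx

lemma le_apply_VaR (hα : α ∈ Ioo 0 1) (hF : IsCDF F) : α ≤ F (VaR α F) := by
  refine ge_of_tendsto ((hF.2.1 _).mono_left (nhdsWithin_mono _ Ioi_subset_Ici_self)) ?_
  refine eventually_nhdsWithin_of_forall fun x hx => ?_
  obtain ⟨y, hy, hyx⟩ := exists_lt_of_csInf_lt (hF.nonempty_setOf_le hα.2) hx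
  exact hy.trans (hF.1 hyx.le)

lemma mul_neg_VaR_le_integral_Iic (hα : α ∈ Ioo 0 1) (hH : IsCDF H)
    (hI : IntegrableOn H (Iic 0)) (hv : VaR α H ≤ 0) :
    α * -VaR α H ≤ ∫ y in Iic 0, H y :=
  calc α * -VaR α H = ∫ _ in Ioc (VaR α H) 0, α := by
        rw [setIntegral_const, Real.volume_real_Ioc_of_le hv, smul_eq_mul]; ring
    _ ≤ ∫ y in Ioc (VaR α H) 0, H y :=
        setIntegral_mono_on (integrableOn_const measure_Ioc_lt_top.ne)
          (hI.mono_set Ioc_subset_Iic_self) measurableSet_Ioc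
          fun _ hx => (hH.le_apply_VaR hα).trans (hH.1 hx.1.le)
    _ ≤ ∫ y in Iic 0, H y :=
        setIntegral_mono_set hI (Eventually.of_forall hH.nonneg) Ioc_subset_Iic_self.eventuallyLE

lemma mul_VaR_le_integral_Ioi (hα : 0 < α) (hH : IsCDF H)
    (hI : IntegrableOn (fun y => 1 - H y) (Ioi 0)) (hv : 0 ≤ VaR α H) :
    (1 - α) * VaR α H ≤ ∫ y in Ioi 0, (1 - H y) :=
  calc (1 - α) * VaR α H = ∫ _ in Ioo 0 (VaR α H), (1 - α) := by
        rw [setIntegral_const, Real.volume_real_Ioo_of_le hv, smul_eq_mul]; ring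
    _ ≤ ∫ y in Ioo 0 (VaR α H), (1 - H y) :=
        setIntegral_mono_on (integrableOn_const measure_Ioo_lt_top.ne)
          (hI.mono_set Ioo_subset_Ioi_self) measurableSet_Ioo
          fun _ hx => by linarith [hH.apply_lt_of_lt_VaR hα hx.2]
    _ ≤ ∫ y in Ioi 0, (1 - H y) :=
        setIntegral_mono_set hI (Eventually.of_forall fun y => sub_nonneg.mpr (hH.le_one y))
          Ioo_subset_Ioi_self.eventuallyLE

lemma abs_VaR_le (hα : α ∈ Ioo 0 1) (hH : IsCDF H)
    (hI : IntegrableOn H (Iic 0)) (hI' : IntegrableOn (fun y => 1 - H y) (Ioi 0)) {C : ℝ}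
    (hC : ∫ y in Iic 0, H y ≤ C) (hC' : ∫ y in Ioi 0, (1 - H y) ≤ C) :
    |VaR α H| ≤ C / min α (1 - α) := by
  rw [le_div_iff₀ (lt_min hα.1 (sub_pos.mpr hα.2))]
  rcases le_total (VaR α H) 0 with hv | hv
  · have := hH.mul_neg_VaR_le_integral_Iic hα hI hv
    rw [abs_of_nonpos hv]
    nlinarith [min_le_left α (1 - α)]
  · have := hH.mul_VaR_le_integral_Ioi hα.1 hI' hv
    rw [abs_of_nonneg hv]
    nlinarith [min_le_right α (1 - α)]

lemma abs_sub_le_dDist (hF : IsCDF F) (hG : IsCDF G) (y : ℝ) : |F y - G y| ≤ dDist F G := by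
  have hbdd : BddAbove (range fun y => |F y - G y|) :=
    ⟨1, forall_mem_range.mpr fun y =>
      abs_sub_le_of_nonneg_of_le (hF.nonneg y) (hF.le_one y) (hG.nonneg y) (hG.le_one y)⟩
  exact (le_ciSup hbdd y).trans (le_max_left _ _)

end IsCDF

lemma integral_Iic_le_add_dDist {F G : ℝ → ℝ} (hF : IntegrableOn F (Iic 0))
    (hG : IntegrableOn G (Iic 0)) :
    ∫ y in Iic 0, G y ≤ (∫ y in Iic 0, F y) + dDist F G := by
  have h : |∫ y in Iic 0, (F y - G y)| ≤ dDist F G := (le_max_left _ _).trans (le_max_right _ _)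
  rw [integral_sub hF hG] at h
  linarith [neg_abs_le ((∫ y in Iic 0, F y) - ∫ y in Iic 0, G y)]

lemma integral_Ioi_one_sub_le_add_dDist {F G : ℝ → ℝ}
    (hF : IntegrableOn (fun y => 1 - F y) (Ioi 0)) (hG : IntegrableOn (fun y => 1 - G y) (Ioi 0)) :
    ∫ y in Ioi 0, (1 - G y) ≤ (∫ y in Ioi 0, (1 - F y)) + dDist F G := by
  have h : |∫ y in Ioi 0, (F y - G y)| ≤ dDist F G := (le_max_right _ _).trans (le_max_right _ _)
  have hsub : ∫ y in Ioi 0, (F y - G y) = (∫ y in Ioi 0, (1 - G y)) - ∫ y in Ioi 0, (1 - F y) := by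
    rw [← integral_sub hG hF]
    exact integral_congr_ae (Eventually.of_forall fun _ => by ring)
  rw [hsub] at h
  linarith [le_abs_self ((∫ y in Ioi 0, (1 - G y)) - ∫ y in Ioi 0, (1 - F y))]

lemma abs_VaR_sub_VaR_le_of_tails {α : ℝ} (hα : α ∈ Ioo 0 1) {F G : ℝ → ℝ}
    (hF : IsCDF F) (hIntF : IntegrableOn F (Iic 0))
    (hIntF' : IntegrableOn (fun y => 1 - F y) (Ioi 0))
    (hG : IsCDF G) (hIntG : IntegrableOn G (Iic 0))
    (hIntG' : IntegrableOn (fun y => 1 - G y) (Ioi 0)) :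
    |VaR α F - VaR α G| ≤ (2 * mTail F + dDist F G) / min α (1 - α) := by
  have hF1 : ∫ y in Iic 0, F y ≤ mTail F := (le_max_left _ _).trans (le_max_right _ _)
  have hF2 : ∫ y in Ioi 0, (1 - F y) ≤ mTail F := (le_max_right _ _).trans (le_max_right _ _)
  have hvF := hF.abs_VaR_le hα hIntF hIntF' hF1 hF2
  have hvG := hG.abs_VaR_le (C := mTail F + dDist F G) hα hIntG hIntG'
    ((integral_Iic_le_add_dDist hIntF hIntG).trans (by linarith))
    ((integral_Ioi_one_sub_le_add_dDist hIntF' hIntG').trans (by linarith))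
  calc |VaR α F - VaR α G| ≤ |VaR α F| + |VaR α G| := abs_sub _ _
    _ ≤ (2 * mTail F + dDist F G) / min α (1 - α) := by
        rw [show 2 * mTail F + dDist F G = mTail F + (mTail F + dDist F G) by ring, add_div]
        exact add_le_add hvF hvG

namespace QuantileGrowth

variable {α b M : ℝ} {F G : ℝ → ℝ} (hα : α ∈ Ioo 0 1) (hF : IsCDF F) (hG : IsCDF G)
  (hgrowth : QuantileGrowth α F b M) {δ : ℝ} (hδ : ∀ y, |F y - G y| ≤ δ)
include hα hF hG hgrowth hδ

lemma VaR_le_VaR_add (hb : 0 ≤ b) (hδM : δ ≤ M) : VaR α G ≤ VaR α F + b * δ := by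
  have hδ0 : 0 ≤ δ := (abs_nonneg _).trans (hδ 0)
  have hαF : α ≤ F (VaR α F + b * δ) :=
    (hF.le_apply_VaR hα).trans (hF.1 (le_add_of_nonneg_right (mul_nonneg hb hδ0)))
  have hg := hgrowth δ ⟨by linarith, hδM⟩
  rw [abs_of_nonneg hδ0, abs_of_nonneg (sub_nonneg.mpr hαF)] at hg
  exact hG.VaR_le hα.1 (by linarith [(abs_le.mp (hδ (VaR α F + b * δ))).2])

/-- Below `VaR α F - b δ`, growth at the level `t = min ((VaR α F - y) / b) M > δ` keeps `F` at
least `t` under `α`, which the perturbation `δ` cannot make up. -/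
lemma VaR_sub_le_VaR (hb : 0 < b) (hδM : δ < M) : VaR α F - b * δ ≤ VaR α G := by
  refine hG.le_VaR hα.2 fun y hy => le_of_not_gt fun hyv => ?_
  have hδ0 : 0 ≤ δ := (abs_nonneg _).trans (hδ 0)
  set t := min ((VaR α F - y) / b) M
  have hδt : δ < t := lt_min ((lt_div_iff₀ hb).mpr (by linarith)) hδM
  have hyt : y ≤ VaR α F - b * t := by
    nlinarith [(le_div_iff₀ hb).mp (min_le_left ((VaR α F - y) / b) M)]
  have hlt : F (VaR α F - b * t) < α :=
    hF.apply_lt_of_lt_VaR hα.1 (sub_lt_self _ (mul_pos hb (hδ0.trans_lt hδt)))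
  have hg := hgrowth (-t) ⟨neg_le_neg (min_le_right _ _), by linarith⟩
  rw [mul_neg, ← sub_eq_add_neg, abs_of_nonpos (by linarith), abs_of_neg (sub_neg.mpr hlt)] at hg
  linarith [hF.1 hyt, (abs_le.mp (hδ y)).1]

lemma abs_VaR_sub_VaR_le (hb : 0 < b) (hδM : δ < M) : |VaR α F - VaR α G| ≤ b * δ := by
  have hup := VaR_le_VaR_add hα hF hG hgrowth hδ hb.le hδM.le
  have hlow := VaR_sub_le_VaR hα hF hG hgrowth hδ hb hδM
  exact abs_sub_le_iff.mpr ⟨by linarith, by linarith⟩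

end QuantileGrowth

/-- VaR is Lipschitz in the norm `d`: under the quantile growth condition,
`|VaR_α(F) − VaR_α(G)| ≤ max{ b_α, (1 + 2 m(F)/M_α)/min{α, 1−α} } · d(F,G)`. -/
theorem VaR_lipschitz (α : ℝ) (hα : α ∈ Set.Ioo (0 : ℝ) 1)
    (F : ℝ → ℝ) (hF : IsCDF F)
    (hIntF : IntegrableOn F (Set.Iic (0 : ℝ)))
    (hIntF' : IntegrableOn (fun y => 1 - F y) (Set.Ioi (0 : ℝ)))
    (bα Mα : ℝ) (hbα : 0 < bα) (hMα : 0 < Mα)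
    (hgrowth : QuantileGrowth α F bα Mα)
    (G : ℝ → ℝ) (hG : IsCDF G)
    (hIntG : IntegrableOn G (Set.Iic (0 : ℝ)))
    (hIntG' : IntegrableOn (fun y => 1 - G y) (Set.Ioi (0 : ℝ))) :
    |VaR α F - VaR α G| ≤
      max bα ((1 + 2 * mTail F / Mα) / min α (1 - α)) * dDist F G := by
  have hd : 0 ≤ dDist F G := (abs_nonneg _).trans (hF.abs_sub_le_dDist hG 0)
  rcases lt_or_ge (dDist F G) Mα with hdM | hdM
  · calc |VaR α F - VaR α G| ≤ bα * dDist F G :=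
          hgrowth.abs_VaR_sub_VaR_le hα hF hG (hF.abs_sub_le_dDist hG) hbα hdM
      _ ≤ _ := mul_le_mul_of_nonneg_right (le_max_left _ _) hd
  · have hm : 0 ≤ mTail F := zero_le_one.trans (le_max_left _ _)
    have h2m : 2 * mTail F ≤ 2 * mTail F / Mα * dDist F G := by
      rw [div_mul_eq_mul_div, le_div_iff₀ hMα]
      exact mul_le_mul_of_nonneg_left hdM (by positivity)
    calc |VaR α F - VaR α G| ≤ (2 * mTail F + dDist F G) / min α (1 - α) :=
          abs_VaR_sub_VaR_le_of_tails hα hF hIntF hIntF' hG hIntG hIntG'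
      _ ≤ (1 + 2 * mTail F / Mα) / min α (1 - α) * dDist F G := by
          rw [div_mul_eq_mul_div]
          gcongr
          · exact (lt_min hα.1 (sub_pos.mpr hα.2)).le
          · linarith
      _ ≤ _ := mul_le_mul_of_nonneg_right (le_max_right _ _) hd
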